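/- Double robustness, outcome model correct: Assume the LDCM-CCMV restriction holds so that E[U(L)|R=r, L_{(r)}] = E[U(L)|R=1, L_{(r)}] for all r ≠ 1, and set m_r(L_{(r)}) = E[U(L)|R=1, L_{(r)}]. Let π*_r(L) = Odds*_r(L_{(r)})/(1+Σ_{s≠1} Odds*_s(L_{(s)})) be possibly misspecified LDCM probabilities built from arbitrary positive functions Odds*_r of L_{(r)}, with π*_1 = 1/(1+Σ_{s≠1} Odds*_s(L_{(s)})). Then E[ 1(R=1)U(L)/π*_1(L) − (1(R=1)/π*_1(L))·Σ_{r≠1} π*_r(L)·m_r(L_{(r)}) + Σ_{r≠1} 1(R=r)·m_r(L_{(r)}) ] = E[U(L)]. -/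
import Mathlib


open Finset MeasureTheory

open Classical in
noncomputable def pr {Ω : Type*} [Fintype Ω] (P : Ω → ℝ) (E : Ω → Prop) : ℝ :=
  ∑ ω, if E ω then P ω else 0

noncomputable def cpr {Ω : Type*} [Fintype Ω] (P : Ω → ℝ) (E F : Ω → Prop) : ℝ :=
  pr P (fun ω => E ω ∧ F ω) / pr P F

noncomputable def ex {Ω : Type*} [Fintype Ω] (P : Ω → ℝ) (U : Ω → ℝ) : ℝ :=
  ∑ ω, P ω * U ω

open Classical in
noncomputable def cex {Ω : Type*} [Fintype Ω] (P : Ω → ℝ) (U : Ω → ℝ) (F : Ω → Prop) : ℝ :=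
  (∑ ω, if F ω then P ω * U ω else 0) / pr P F

section aux
open Classical
variable {Ω : Type*} [Fintype Ω]

lemma pr_nonneg (P : Ω → ℝ) (hP : ∀ ω, 0 ≤ P ω) (E : Ω → Prop) : 0 ≤ pr P E := by
  refine Finset.sum_nonneg fun ω _ => ?_
  split <;> simp [hP ω]

lemma pr_zero (P : Ω → ℝ) (hP : ∀ ω, 0 ≤ P ω) (E : Ω → Prop)
    (h : pr P E = 0) (ω : Ω) (hω : E ω) : P ω = 0 := by
  have h0 : ∀ x ∈ Finset.univ, (0:ℝ) ≤ if E x then P x else 0 := by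
    intro x _; split <;> simp [hP x]
  have := (Finset.sum_eq_zero_iff_of_nonneg h0).mp h ω (Finset.mem_univ ω)
  simpa [hω] using this

lemma pr_mono (P : Ω → ℝ) (hP : ∀ ω, 0 ≤ P ω) (E F : Ω → Prop) (h : ∀ ω, E ω → F ω) :
    pr P E ≤ pr P F := by
  refine Finset.sum_le_sum fun ω _ => ?_
  by_cases hE : E ω
  · rw [if_pos hE, if_pos (h ω hE)]
  · rw [if_neg hE]; split <;> simp [hP ω]

lemma cell_sum (P : Ω → ℝ) (hP : ∀ ω, 0 ≤ P ω) (E : Ω → Prop) (V : Ω → ℝ) (c : ℝ)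
    (hc : pr P E ≠ 0 → c = cex P V E) :
    ∑ ω, (if E ω then P ω * (V ω - c) else 0) = 0 := by
  by_cases h : pr P E = 0
  · refine Finset.sum_eq_zero fun ω _ => ?_
    by_cases hE : E ω
    · rw [if_pos hE, pr_zero P hP E h ω hE, zero_mul]
    · rw [if_neg hE]
  · have hc' := hc h
    have key : ∑ ω, (if E ω then P ω * (V ω - c) else 0)
        = (∑ ω, if E ω then P ω * V ω else 0) - c * pr P E := by
      rw [pr, Finset.mul_sum, ← Finset.sum_sub_distrib]
      refine Finset.sum_congr rfl fun ω _ => ?_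
      by_cases hE : E ω
      · rw [if_pos hE, if_pos hE, if_pos hE]; ring
      · rw [if_neg hE, if_neg hE, if_neg hE]; ring
    rw [key, hc', cex, div_mul_cancel₀ _ h, sub_self]

lemma cell_sum' (P : Ω → ℝ) (hP : ∀ ω, 0 ≤ P ω) (E : Ω → Prop) (V : Ω → ℝ) (c : ℝ)
    (hc : pr P E ≠ 0 → c = cex P V E) :
    ∑ ω, (if E ω then P ω * (c - V ω) else 0) = 0 := by
  by_cases h : pr P E = 0
  · refine Finset.sum_eq_zero fun ω _ => ?_
    by_cases hE : E ω
    · rw [if_pos hE, pr_zero P hP E h ω hE, zero_mul]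
    · rw [if_neg hE]
  · have hc' := hc h
    have key : ∑ ω, (if E ω then P ω * (c - V ω) else 0)
        = c * pr P E - (∑ ω, if E ω then P ω * V ω else 0) := by
      rw [pr, Finset.mul_sum, ← Finset.sum_sub_distrib]
      refine Finset.sum_congr rfl fun ω _ => ?_
      by_cases hE : E ω
      · rw [if_pos hE, if_pos hE, if_pos hE]; ring
      · rw [if_neg hE, if_neg hE, if_neg hE]; ring
    rw [key, hc', cex, div_mul_cancel₀ _ h, sub_self]
end aux

/-- Double robustness when the outcome model is correct: under the CCMV
restriction, with `m_r(b) = E[U(L) | R=1, L_(r)=b]` and arbitrary positive working odds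
`Odds*_r` of the observed components (defining working LDCM probabilities), the augmented
IPW estimating function is unbiased for `E[U(L)]`. Pattern `0` is the complete-case pattern;
we use `1/π*₁(L) = 1 + Σ_{r≠1} Odds*_r(L_(r))` and `π*_r/π*₁ = Odds*_r(L_(r))`. -/
theorem stmt10 {Ω A : Type*} [Fintype Ω] {J : ℕ} {B : Fin (J + 1) → Type*}
    (P : Ω → ℝ) (hP : ∀ ω, 0 ≤ P ω) (hPsum : ∑ ω, P ω = 1)
    (R : Ω → Fin (J + 1)) (L : Ω → A)
    (O : (r : Fin (J + 1)) → A → B r) (U : A → ℝ)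
    (hpos : ∀ l : A, 0 < pr P (fun ω => L ω = l) →
      0 < pr P (fun ω => R ω = 0 ∧ L ω = l))
    (hCCMV : ∀ r, r ≠ 0 → ∀ b : B r,
      0 < pr P (fun ω => R ω = r ∧ O r (L ω) = b) →
      cex P (fun ω => U (L ω)) (fun ω => R ω = r ∧ O r (L ω) = b) =
        cex P (fun ω => U (L ω)) (fun ω => R ω = 0 ∧ O r (L ω) = b))
    (OddsStar : (r : Fin (J + 1)) → B r → ℝ) (hOdds : ∀ r b, 0 < OddsStar r b)
    (m : (r : Fin (J + 1)) → B r → ℝ)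
    (hm : ∀ r, r ≠ 0 → ∀ b : B r, 0 < pr P (fun ω => O r (L ω) = b) →
      m r b = cex P (fun ω => U (L ω)) (fun ω => R ω = 0 ∧ O r (L ω) = b)) :
    ex P (fun ω =>
        (if R ω = 0 then
          (1 + ∑ s ∈ Finset.univ.erase (0 : Fin (J + 1)), OddsStar s (O s (L ω))) * U (L ω) -
            ∑ r ∈ Finset.univ.erase (0 : Fin (J + 1)),
              OddsStar r (O r (L ω)) * m r (O r (L ω))
        else 0) +
        ∑ r ∈ Finset.univ.erase (0 : Fin (J + 1)),
          (if R ω = r then m r (O r (L ω)) else 0)) =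
      ex P (fun ω => U (L ω)) := by
  classical
  set S := Finset.univ.erase (0 : Fin (J + 1)) with hSdef
  -- the per-(r, ω) correction term
  set g : Fin (J + 1) → Ω → ℝ := fun r ω =>
    P ω * (if R ω = 0 then OddsStar r (O r (L ω)) * (U (L ω) - m r (O r (L ω))) else 0)
      + P ω * (if R ω = r then m r (O r (L ω)) - U (L ω) else 0) with hgdef
  have key : ∀ r ∈ S, ∑ ω, g r ω = 0 := by
    intro r hr
    have hr0 : r ≠ 0 := Finset.ne_of_mem_erase hr
    rw [← Finset.sum_fiberwise_of_maps_to
      (fun ω _ => Finset.mem_image_of_mem (fun ω => O r (L ω)) (Finset.mem_univ ω)) (g r)]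
    refine Finset.sum_eq_zero fun b _ => ?_
    have step : ∑ ω ∈ Finset.univ.filter (fun ω => O r (L ω) = b), g r ω
        = OddsStar r b *
            (∑ ω, if R ω = 0 ∧ O r (L ω) = b then
              P ω * (U (L ω) - m r b) else 0)
          + ∑ ω, if R ω = r ∧ O r (L ω) = b then
              P ω * (m r b - U (L ω)) else 0 := by
      rw [Finset.sum_filter, Finset.mul_sum, ← Finset.sum_add_distrib]
      refine Finset.sum_congr rfl fun ω _ => ?_
      simp only [hgdef]
      by_cases hb : O r (L ω) = b
      · by_cases h0 : R ω = 0
        · have hRr : ¬ R ω = r := by rw [h0]; exact fun h => hr0 h.symm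
          rw [if_pos hb, if_pos h0, if_neg hRr, if_pos ⟨h0, hb⟩,
            if_neg (fun h : R ω = r ∧ O r (L ω) = b => hRr h.1), hb]
          ring
        · by_cases hRr : R ω = r
          · rw [if_pos hb, if_neg h0, if_pos hRr,
              if_neg (fun h : R ω = 0 ∧ O r (L ω) = b => h0 h.1), if_pos ⟨hRr, hb⟩, hb]
            ring
          · rw [if_pos hb, if_neg h0, if_neg hRr,
              if_neg (fun h : R ω = 0 ∧ O r (L ω) = b => h0 h.1),
              if_neg (fun h : R ω = r ∧ O r (L ω) = b => hRr h.1)]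
            ring
      · rw [if_neg hb, if_neg (fun h : R ω = 0 ∧ O r (L ω) = b => hb h.2),
          if_neg (fun h : R ω = r ∧ O r (L ω) = b => hb h.2)]
        ring
    rw [step]
    have hA : (∑ ω, if R ω = 0 ∧ O r (L ω) = b then
        P ω * (U (L ω) - m r b) else 0) = 0 := by
      refine Eq.trans (Finset.sum_congr rfl fun ω _ => ?_)
        (cell_sum P hP (fun ω => R ω = 0 ∧ O r (L ω) = b) (fun ω => U (L ω)) (m r b)
          (fun hne => by
            have hpos1 : 0 < pr P (fun ω => R ω = 0 ∧ O r (L ω) = b) :=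
              lt_of_le_of_ne (pr_nonneg P hP _) (Ne.symm hne)
            have hpos2 : 0 < pr P (fun ω => O r (L ω) = b) :=
              lt_of_lt_of_le hpos1 (pr_mono P hP _ _ fun ω h => h.2)
            exact hm r hr0 b hpos2))
      by_cases hE : R ω = 0 ∧ O r (L ω) = b
      · rw [if_pos hE, if_pos hE]
      · rw [if_neg hE, if_neg hE]
    have hB : (∑ ω, if R ω = r ∧ O r (L ω) = b then
        P ω * (m r b - U (L ω)) else 0) = 0 := by
      refine Eq.trans (Finset.sum_congr rfl fun ω _ => ?_)
        (cell_sum' P hP (fun ω => R ω = r ∧ O r (L ω) = b) (fun ω => U (L ω)) (m r b)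
          (fun hne => by
            have hpos1 : 0 < pr P (fun ω => R ω = r ∧ O r (L ω) = b) :=
              lt_of_le_of_ne (pr_nonneg P hP _) (Ne.symm hne)
            have hpos2 : 0 < pr P (fun ω => O r (L ω) = b) :=
              lt_of_lt_of_le hpos1 (pr_mono P hP _ _ fun ω h => h.2)
            rw [hm r hr0 b hpos2]
            exact (hCCMV r hr0 b hpos1).symm))
      by_cases hE : R ω = r ∧ O r (L ω) = b
      · rw [if_pos hE, if_pos hE]
      · rw [if_neg hE, if_neg hE]
    rw [hA, hB, mul_zero, add_zero]
  -- pointwise decomposition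
  have expand : ∀ ω : Ω,
      P ω * ((if R ω = 0 then
          (1 + ∑ s ∈ S, OddsStar s (O s (L ω))) * U (L ω) -
            ∑ r ∈ S, OddsStar r (O r (L ω)) * m r (O r (L ω))
        else 0) + ∑ r ∈ S, (if R ω = r then m r (O r (L ω)) else 0))
        - P ω * U (L ω) = ∑ r ∈ S, g r ω := by
    intro ω
    by_cases h0 : R ω = 0
    · have hz : ∀ r ∈ S, ¬ R ω = r := by
        intro r hr
        rw [h0]; exact fun h => Finset.ne_of_mem_erase hr h.symm
      have e1 : ∑ r ∈ S, (if R ω = r then m r (O r (L ω)) else 0) = 0 :=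
        Finset.sum_eq_zero fun r hr => if_neg (hz r hr)
      have e2 : ∑ r ∈ S, g r ω
          = P ω * ((∑ r ∈ S, OddsStar r (O r (L ω))) * U (L ω)
              - ∑ r ∈ S, OddsStar r (O r (L ω)) * m r (O r (L ω))) := by
        rw [mul_sub, Finset.sum_mul, Finset.mul_sum, Finset.mul_sum, ← Finset.sum_sub_distrib]
        refine Finset.sum_congr rfl fun r hr => ?_
        simp only [hgdef, if_pos h0, if_neg (hz r hr), mul_zero, add_zero]
        ring
      rw [if_pos h0, e1, e2, add_zero]
      ring
    · have hmem : R ω ∈ S := Finset.mem_erase.mpr ⟨h0, Finset.mem_univ _⟩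
      rw [if_neg h0]
      have e1 : ∑ r ∈ S, (if R ω = r then m r (O r (L ω)) else 0)
          = m (R ω) (O (R ω) (L ω)) := by
        rw [Finset.sum_ite_eq S (R ω) (fun r => m r (O r (L ω))), if_pos hmem]
      have e2 : ∑ r ∈ S, g r ω
          = P ω * (m (R ω) (O (R ω) (L ω)) - U (L ω)) := by
        have : ∀ r ∈ S, g r ω
            = if R ω = r then P ω * (m r (O r (L ω)) - U (L ω)) else 0 := by
          intro r hr
          rw [hgdef]
          by_cases hRr : R ω = r
          · simp only [if_neg h0, if_pos hRr, mul_zero, zero_add]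
          · simp only [if_neg h0, if_neg hRr, mul_zero, zero_add]
        rw [Finset.sum_congr rfl this,
          Finset.sum_ite_eq S (R ω) (fun r => P ω * (m r (O r (L ω)) - U (L ω))),
          if_pos hmem]
      rw [e1, e2]; ring
  have main : ex P (fun ω =>
        (if R ω = 0 then
          (1 + ∑ s ∈ S, OddsStar s (O s (L ω))) * U (L ω) -
            ∑ r ∈ S, OddsStar r (O r (L ω)) * m r (O r (L ω))
        else 0) + ∑ r ∈ S, (if R ω = r then m r (O r (L ω)) else 0))
      - ex P (fun ω => U (L ω)) = 0 := by
    rw [ex, ex, ← Finset.sum_sub_distrib,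
      Finset.sum_congr rfl fun ω _ => expand ω, Finset.sum_comm]
    exact Finset.sum_eq_zero key
  linarith [main]
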